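/- Lemma A.1 (weakly chained diagonally dominant matrices are nonsingular): Let A be a real m × m matrix that is weakly diagonally dominant, i.e. |a_{ii}| ≥ Σ_{j≠i} |a_{ij}| for every row i. Suppose that for each row i₁ that is not strictly diagonally dominant (i.e. |a_{i₁i₁}| = Σ_{j≠i₁} |a_{i₁j}|), there exists a walk i₁ → i₂ → ⋯ → i_q in the directed graph of A ending at a row i_q that is strictly diagonally dominant (|a_{i_qi_q}| > Σ_{j≠i_q} |a_{i_qj}|). Then A is nonsingular. -/
import Mathlib


open Finset

/-- Row `i` of `A` is strictly diagonally dominant. -/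
def RowSDD {m : ℕ} (A : Matrix (Fin m) (Fin m) ℝ) (i : Fin m) : Prop :=
  ∑ j ∈ univ.erase i, |A i j| < |A i i|

/-- The edge relation of the directed graph of `A`: for `i ≠ j` there is an edge `i → j`
iff `A i j ≠ 0`. -/
def MatrixEdge {m : ℕ} (A : Matrix (Fin m) (Fin m) ℝ) (i j : Fin m) : Prop :=
  i ≠ j ∧ A i j ≠ 0

/-- Lemma A.1: a weakly diagonally dominant matrix such that every non-SDD row has a walk in
the directed graph of `A` ending at an SDD row is nonsingular. -/
theorem weakly_chained_diagonally_dominant_nonsingular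
    {m : ℕ} (A : Matrix (Fin m) (Fin m) ℝ)
    (hWDD : ∀ i, ∑ j ∈ univ.erase i, |A i j| ≤ |A i i|)
    (hchain : ∀ i, ¬ RowSDD A i →
      ∃ q, Relation.ReflTransGen (MatrixEdge A) i q ∧ RowSDD A q) :
    A.det ≠ 0 := by
  intro hdet
  obtain ⟨v, hv, hAv⟩ := Matrix.exists_mulVec_eq_zero_iff.2 hdet
  obtain ⟨i1, hi1⟩ := Function.ne_iff.1 hv
  haveI : Nonempty (Fin m) := ⟨i1⟩
  obtain ⟨i0, hi0⟩ := Finite.exists_max (fun i => |v i|)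
  set M := |v i0| with hM
  have hMpos : 0 < M := lt_of_lt_of_le (abs_pos.2 (by simpa using hi1)) (hi0 i1)
  have key : ∀ i, |v i| = M →
      ¬ RowSDD A i ∧ ∀ j, A i j ≠ 0 → |v j| = M := by
    intro i hvi
    have hrow : ∑ j, A i j * v j = 0 := by
      have := congrFun hAv i
      simpa [Matrix.mulVec, dotProduct] using this
    have hsum := Finset.sum_erase_add univ (fun j => A i j * v j) (mem_univ i)
    have hsplit : A i i * v i = -∑ j ∈ univ.erase i, A i j * v j := by
      linarith
    have h1 : |A i i| * M ≤ ∑ j ∈ univ.erase i, |A i j| * |v j| := by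
      calc |A i i| * M = |A i i * v i| := by rw [abs_mul, hvi]
        _ = |∑ j ∈ univ.erase i, A i j * v j| := by rw [hsplit, abs_neg]
        _ ≤ ∑ j ∈ univ.erase i, |A i j * v j| := Finset.abs_sum_le_sum_abs _ _
        _ = ∑ j ∈ univ.erase i, |A i j| * |v j| := by simp [abs_mul]
    have h2 : ∀ j ∈ univ.erase i, |A i j| * |v j| ≤ |A i j| * M :=
      fun j _ => mul_le_mul_of_nonneg_left (hi0 j) (abs_nonneg _)
    have h3 : (∑ j ∈ univ.erase i, |A i j|) * M ≤ |A i i| * M :=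
      mul_le_mul_of_nonneg_right (hWDD i) hMpos.le
    have h4 : ∑ j ∈ univ.erase i, |A i j| * M = (∑ j ∈ univ.erase i, |A i j|) * M :=
      (Finset.sum_mul _ _ _).symm
    have h5 : ∑ j ∈ univ.erase i, |A i j| * |v j| ≤ ∑ j ∈ univ.erase i, |A i j| * M :=
      Finset.sum_le_sum h2
    have heq : ∑ j ∈ univ.erase i, |A i j| * |v j| = ∑ j ∈ univ.erase i, |A i j| * M := by
      linarith
    have hterm := (Finset.sum_eq_sum_iff_of_le h2).1 heq
    constructor
    · intro hsdd
      unfold RowSDD at hsdd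
      nlinarith
    · intro j hj
      rcases eq_or_ne j i with rfl | hne
      · exact hvi
      · have := hterm j (Finset.mem_erase.2 ⟨hne, mem_univ j⟩)
        exact mul_left_cancel₀ (abs_ne_zero.2 hj) this
  have hnot : ¬ RowSDD A i0 := (key i0 rfl).1
  obtain ⟨q, hwalk, hq⟩ := hchain i0 hnot
  have hreach : ∀ q', Relation.ReflTransGen (MatrixEdge A) i0 q' → |v q'| = M := by
    intro q' hw
    induction hw with
    | refl => rfl
    | tail hw hedge ih => exact (key _ ih).2 _ hedge.2
  exact (key q (hreach q hwalk)).1 hq
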